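/- arXiv:math/0404455 — 2 statements merged into one kernel-verified Lean document; each statement's English description precedes it below -/
import Mathlib

section
/- For every real ε with −4 < ε < 0, the interval integral ∫_{−4}^{ε} φ⁻³·(−1/2 − φ/4 + φ³/64 + φ⁴/512) dφ equals 1/(4ε²) + 1/(4ε) + 3/32 + ε/64 + ε²/1024. Consequently 2π² times this integral equals π²/(2ε²) + π²/(2ε) + 3π²/16 + π²ε/32 + π²ε²/512, and in particular the expansion contains no log(−ε) term. -/
open Real

/-!
The integrand `φ⁻³ (−1/2 − φ/4 + φ³/64 + φ⁴/512)` is a Laurent polynomial without a `φ⁻¹` term,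
so it has the rational primitive `1/(4φ²) + 1/(4φ) + φ/64 + φ²/1024`, which takes the value
`−3/32` at `φ = −4`; no logarithm can appear.
-/

noncomputable def bergmanVolumePrimitive (t : ℝ) : ℝ :=
  1 / (4 * t ^ 2) + 1 / (4 * t) + t / 64 + t ^ 2 / 1024

theorem hasDerivAt_bergmanVolumePrimitive {x : ℝ} (hx : x ≠ 0) :
    HasDerivAt bergmanVolumePrimitive
      (x ^ (-3 : ℤ) * (-1 / 2 - x / 4 + x ^ 3 / 64 + x ^ 4 / 512)) x := by
  have hsq : HasDerivAt (fun t : ℝ => 4 * t ^ 2) (4 * (2 * x)) x := by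
    simpa using (hasDerivAt_pow 2 x).const_mul 4
  have hlin : HasDerivAt (fun t : ℝ => 4 * t) (4 * 1) x := (hasDerivAt_id x).const_mul 4
  refine HasDerivAt.congr_deriv (f := bergmanVolumePrimitive)
    (((((hasDerivAt_const x (1 : ℝ)).fun_div hsq (by positivity)).fun_add
      ((hasDerivAt_const x (1 : ℝ)).fun_div hlin (by simpa using hx))).fun_add
      ((hasDerivAt_id x).div_const 64)).fun_add ((hasDerivAt_pow 2 x).div_const 1024)) ?_
  field_simp
  ring

theorem integral_bergmanVolumeDensity {a b : ℝ} (h : (0 : ℝ) ∉ Set.uIcc a b) :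
    ∫ φ in a..b, φ ^ (-3 : ℤ) * (-1 / 2 - φ / 4 + φ ^ 3 / 64 + φ ^ 4 / 512)
      = bergmanVolumePrimitive b - bergmanVolumePrimitive a := by
  have hne : ∀ x ∈ Set.uIcc a b, x ≠ 0 := fun x hx h0 => h (h0 ▸ hx)
  refine intervalIntegral.integral_eq_sub_of_hasDerivAt
    (fun x hx => hasDerivAt_bergmanVolumePrimitive (hne x hx)) ?_
  refine ContinuousOn.intervalIntegrable (ContinuousOn.mul ?_ (by fun_prop))
  exact continuousOn_id.zpow₀ _ fun x hx => Or.inl (hne x hx)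

theorem bergman_volume_expansion_general (ε : ℝ) (hε1 : ε < 0) :
    (∫ φ in (-4 : ℝ)..ε,
        φ ^ (-3 : ℤ) * (-1 / 2 - φ / 4 + φ ^ 3 / 64 + φ ^ 4 / 512))
      = 1 / (4 * ε ^ 2) + 1 / (4 * ε) + 3 / 32 + ε / 64 + ε ^ 2 / 1024 ∧
    2 * π ^ 2 * (∫ φ in (-4 : ℝ)..ε,
        φ ^ (-3 : ℤ) * (-1 / 2 - φ / 4 + φ ^ 3 / 64 + φ ^ 4 / 512))
      = π ^ 2 / (2 * ε ^ 2) + π ^ 2 / (2 * ε) + 3 * π ^ 2 / 16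
        + π ^ 2 * ε / 32 + π ^ 2 * ε ^ 2 / 512 := by
  have hprim : bergmanVolumePrimitive (-4) = -3 / 32 := by
    norm_num [bergmanVolumePrimitive]
  rw [integral_bergmanVolumeDensity (Set.notMem_uIcc_of_gt (by norm_num) hε1), hprim,
    bergmanVolumePrimitive]
  constructor <;> ring

/-- The volume expansion for the Bergman metric on the unit ball in `ℂ²`:
for `−4 < ε < 0`,
`∫_{−4}^{ε} φ⁻³(−1/2 − φ/4 + φ³/64 + φ⁴/512) dφ
  = 1/(4ε²) + 1/(4ε) + 3/32 + ε/64 + ε²/1024`,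
and hence `2π²` times this integral equals
`π²/(2ε²) + π²/(2ε) + 3π²/16 + π²ε/32 + π²ε²/512`; in particular the
expansion contains no `log(−ε)` term. -/
theorem bergman_volume_expansion (ε : ℝ) (hε0 : -4 < ε) (hε1 : ε < 0) :
    (∫ φ in (-4 : ℝ)..ε,
        φ ^ (-3 : ℤ) * (-1 / 2 - φ / 4 + φ ^ 3 / 64 + φ ^ 4 / 512))
      = 1 / (4 * ε ^ 2) + 1 / (4 * ε) + 3 / 32 + ε / 64 + ε ^ 2 / 1024 ∧
    2 * π ^ 2 * (∫ φ in (-4 : ℝ)..ε,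
        φ ^ (-3 : ℤ) * (-1 / 2 - φ / 4 + φ ^ 3 / 64 + φ ^ 4 / 512))
      = π ^ 2 / (2 * ε ^ 2) + π ^ 2 / (2 * ε) + 3 * π ^ 2 / 16
        + π ^ 2 * ε / 32 + π ^ 2 * ε ^ 2 / 512 :=
  bergman_volume_expansion_general ε hε1
end

section
/- The limit, as ε tends to 0 from below, of 2π²·∫_{−4}^{ε} φ⁻³·(−1/2 − φ/4 + φ³/64 + φ⁴/512) dφ − π²/(2ε²) − π²/(2ε) exists and equals 3π²/16. -/
/-! The integrand is a Laurent polynomial with the explicit primitive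
`φ⁻²/4 + φ⁻¹/4 + φ/64 + φ²/1024`. Its two polar terms, multiplied by `2π²`, are exactly the
subtracted divergences `π²/(2ε²) + π²/(2ε)`, so the renormalized expression equals
`π²ε/32 + π²ε²/512 + 3π²/16` for every `ε < 0`; the constant comes from the primitive at `-4`. -/

open Real Filter Set

namespace BergmanBall

noncomputable def volumeDensity (φ : ℝ) : ℝ :=
  φ ^ (-3 : ℤ) * (-1 / 2 - φ / 4 + φ ^ 3 / 64 + φ ^ 4 / 512)

noncomputable def volumeDensityPrimitive (φ : ℝ) : ℝ :=
  φ ^ (-2 : ℤ) / 4 + φ ^ (-1 : ℤ) / 4 + φ / 64 + φ ^ 2 / 1024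

theorem hasDerivAt_volumeDensityPrimitive {φ : ℝ} (hφ : φ ≠ 0) :
    HasDerivAt volumeDensityPrimitive (volumeDensity φ) φ := by
  have h₁ : HasDerivAt (fun x : ℝ => x ^ (-2 : ℤ)) ((-2 : ℤ) * φ ^ (-3 : ℤ)) φ := by
    simpa using hasDerivAt_zpow (-2) φ (Or.inl hφ)
  have h₂ : HasDerivAt (fun x : ℝ => x ^ (-1 : ℤ)) ((-1 : ℤ) * φ ^ (-2 : ℤ)) φ := by
    simpa using hasDerivAt_zpow (-1) φ (Or.inl hφ)
  refine ((((h₁.div_const 4).add (h₂.div_const 4)).add ((hasDerivAt_id' φ).div_const 64)).add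
    ((hasDerivAt_pow 2 φ).div_const 1024)).congr_deriv ?_
  simp only [volumeDensity, zpow_neg, zpow_ofNat, Int.cast_neg, Int.cast_ofNat, Int.cast_one]
  field_simp
  ring

theorem volumeDensityPrimitive_neg_four : volumeDensityPrimitive (-4) = -3 / 32 := by
  norm_num [volumeDensityPrimitive]

theorem integral_volumeDensity {ε : ℝ} (hε : ε < 0) :
    ∫ φ in (-4 : ℝ)..ε, volumeDensity φ = volumeDensityPrimitive ε + 3 / 32 := by
  have hne : ∀ x ∈ uIcc (-4 : ℝ) ε, x ≠ 0 := fun x hx =>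
    (hx.2.trans_lt (max_lt (by norm_num) hε)).ne
  have hcont : ContinuousOn volumeDensity (uIcc (-4) ε) :=
    (continuousOn_id.zpow₀ (-3) fun x hx => Or.inl (hne x hx)).mul (by fun_prop)
  rw [intervalIntegral.integral_eq_sub_of_hasDerivAt
    (fun x hx => hasDerivAt_volumeDensityPrimitive (hne x hx)) (hcont.intervalIntegrable),
    volumeDensityPrimitive_neg_four]
  ring

theorem renormalizedVolume_eq {ε : ℝ} (hε : ε < 0) :
    2 * π ^ 2 * (∫ φ in (-4 : ℝ)..ε, volumeDensity φ) - π ^ 2 / (2 * ε ^ 2) - π ^ 2 / (2 * ε)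
      = π ^ 2 * ε / 32 + π ^ 2 * ε ^ 2 / 512 + 3 * π ^ 2 / 16 := by
  have hε₀ : ε ≠ 0 := hε.ne
  rw [integral_volumeDensity hε, volumeDensityPrimitive]
  simp only [zpow_neg, zpow_ofNat]
  field_simp
  ring

end BergmanBall

/-- The renormalized volume of the Bergman metric on the unit ball in `ℂ²`:
as `ε → 0⁻`, the quantity
`2π² ∫_{−4}^{ε} φ⁻³(−1/2 − φ/4 + φ³/64 + φ⁴/512) dφ − π²/(2ε²) − π²/(2ε)`
tends to `3π²/16`. -/
theorem bergman_renormalized_volume :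
    Tendsto (fun ε : ℝ =>
        2 * π ^ 2 * (∫ φ in (-4 : ℝ)..ε,
          φ ^ (-3 : ℤ) * (-1 / 2 - φ / 4 + φ ^ 3 / 64 + φ ^ 4 / 512))
          - π ^ 2 / (2 * ε ^ 2) - π ^ 2 / (2 * ε))
      (nhdsWithin 0 (Set.Iio 0)) (nhds (3 * π ^ 2 / 16)) := by
  have hpoly : Tendsto (fun ε : ℝ => π ^ 2 * ε / 32 + π ^ 2 * ε ^ 2 / 512 + 3 * π ^ 2 / 16)
      (nhdsWithin 0 (Iio 0)) (nhds (3 * π ^ 2 / 16)) := by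
    convert ((by fun_prop : Continuous fun ε : ℝ =>
      π ^ 2 * ε / 32 + π ^ 2 * ε ^ 2 / 512 + 3 * π ^ 2 / 16).tendsto 0).mono_left
      nhdsWithin_le_nhds using 2
    ring
  refine hpoly.congr' ?_
  filter_upwards [self_mem_nhdsWithin] with ε hε
  exact (BergmanBall.renormalizedVolume_eq hε).symm
end
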